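/- arXiv:1904.02376 — 2 statements merged into one kernel-verified Lean document; each statement's English description precedes it below -/
import Mathlib

section
/- Let R be a G-graded ring and n a natural number. Then R is graded nil clean if and only if for every σ ∈ G^n, the upper triangular matrix ring T_n(R)(σ), with the grading whose λ-component has (i,j)-entry in R_{g_i λ g_j^{-1}}, is graded nil clean. -/
/-- A `G`-grading of a ring `R`: a family of additive subgroups `C g` with
`C g * C h ⊆ C (g*h)`, `1 ∈ C e`, and `R = ⊕_g C g` (internal direct sum). -/
structure Grading (G : Type*) [Group G] [DecidableEq G] (R : Type*) [Ring R] where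
  C : G → AddSubgroup R
  one_mem : (1 : R) ∈ C 1
  mul_mem : ∀ {g h : G} {a b : R}, a ∈ C g → b ∈ C h → a * b ∈ C (g * h)
  isInternal : DirectSum.IsInternal C

namespace Grading

variable {G : Type*} [Group G] [DecidableEq G] {R : Type*} [Ring R]

/-- An element is homogeneous if it lies in some component. -/
def Homogeneous (A : Grading G R) (a : R) : Prop := ∃ g, a ∈ A.C g

/-- A homogeneous element is graded nil clean if it is the sum of a homogeneous
idempotent and a homogeneous nilpotent. -/
def IsGradedNilClean (A : Grading G R) (a : R) : Prop :=
  ∃ f b : R, A.Homogeneous f ∧ IsIdempotentElem f ∧ A.Homogeneous b ∧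
    IsNilpotent b ∧ a = f + b

/-- A graded ring is graded nil clean if every homogeneous element is. -/
def GradedNilClean (A : Grading G R) : Prop :=
  ∀ a : R, A.Homogeneous a → A.IsGradedNilClean a

/-- Graded strongly nil clean element: the idempotent and nilpotent commute. -/
def IsGradedStronglyNilClean (A : Grading G R) (a : R) : Prop :=
  ∃ f b : R, A.Homogeneous f ∧ IsIdempotentElem f ∧ A.Homogeneous b ∧
    IsNilpotent b ∧ f * b = b * f ∧ a = f + b

def GradedStronglyNilClean (A : Grading G R) : Prop :=
  ∀ a : R, A.Homogeneous a → A.IsGradedStronglyNilClean a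

end Grading

/-- The `λ`-component of the graded upper triangular matrix ring `T_n(R)(σ)`:
upper triangular matrices whose `(i,j)` entry lies in `R_{σ_i λ σ_j⁻¹}`. -/
def triC {G : Type*} [Group G] [DecidableEq G] {R : Type*} [Ring R] {n : ℕ}
    (A : Grading G R) (σ : Fin n → G) (lam : G) :
    AddSubgroup (Matrix (Fin n) (Fin n) R) where
  carrier := {M | (∀ i j : Fin n, j < i → M i j = 0) ∧
    ∀ i j : Fin n, M i j ∈ A.C (σ i * lam * (σ j)⁻¹)}
  add_mem' := by
    rintro a b ⟨ha1, ha2⟩ ⟨hb1, hb2⟩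
    refine ⟨fun i j hij => ?_, fun i j => ?_⟩
    · simp [Matrix.add_apply, ha1 i j hij, hb1 i j hij]
    · exact add_mem (ha2 i j) (hb2 i j)
  zero_mem' := ⟨fun i j _ => rfl, fun i j => zero_mem _⟩
  neg_mem' := by
    rintro a ⟨h1, h2⟩
    exact ⟨fun i j hij => by simp [Matrix.neg_apply, h1 i j hij],
      fun i j => neg_mem (h2 i j)⟩

/-! Taking diagonal entries is multiplicative on upper triangular matrices, and the strictly upper
triangular ones are nilpotent; so a triangular matrix is nilpotent as soon as its diagonal is.
A nil clean decomposition of `a ∈ R_g` can always be normalised to an idempotent of degree `1`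
plus a nilpotent of degree `g`. Decomposing the diagonal of a homogeneous triangular matrix `M`
this way gives a diagonal idempotent `E` of degree `1`, and `M - E` is homogeneous of the degree
of `M` with nilpotent diagonal. Conversely, `a ∈ R_g` is a diagonal entry of the homogeneous
scalar matrix `a • 1` for `σ = 1`, and reading off that entry of its decomposition decomposes `a`. -/

namespace Matrix

section Semiring

variable {R : Type*} [Semiring R]

theorem IsUpperTriangular.mul_apply_self {m : Type*} [LinearOrder m] [Fintype m]
    {M N : Matrix m m R} (hM : M.IsUpperTriangular) (hN : N.IsUpperTriangular) (i : m) :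
    (M * N) i i = M i i * N i i := by
  rw [mul_apply, Finset.sum_eq_single i]
  · intro k _ hki
    rcases hki.lt_or_gt with hk | hk
    · rw [hM hk, zero_mul]
    · rw [hN hk, mul_zero]
  · simp

theorem IsUpperTriangular.pow_apply_self {m : Type*} [LinearOrder m] [Fintype m]
    [DecidableEq m] {M : Matrix m m R} (hM : M.IsUpperTriangular) (i : m) (k : ℕ) :
    (M ^ k) i i = M i i ^ k := by
  induction k with
  | zero => simp
  | succ k ih => rw [pow_succ, IsUpperTriangular.mul_apply_self (hM.pow k) hM, ih, pow_succ]

variable {n : ℕ}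

theorem pow_apply_eq_zero_of_strictlyUpper {M : Matrix (Fin n) (Fin n) R}
    (hM : ∀ i j, j ≤ i → M i j = 0) (k : ℕ) (i j : Fin n) (hij : (j : ℕ) < i + k) :
    (M ^ k) i j = 0 := by
  induction k generalizing i with
  | zero => exact one_apply_ne (by rintro rfl; omega)
  | succ k ih =>
    rw [pow_succ', mul_apply]
    refine Finset.sum_eq_zero fun l _ => ?_
    rcases le_or_gt l i with hli | hil
    · rw [hM i l hli, zero_mul]
    · rw [ih l (by omega), mul_zero]

theorem pow_eq_zero_of_strictlyUpper {M : Matrix (Fin n) (Fin n) R}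
    (hM : ∀ i j, j ≤ i → M i j = 0) : M ^ n = 0 := by
  ext i j
  exact pow_apply_eq_zero_of_strictlyUpper hM n i j (by omega)

theorem IsUpperTriangular.isNilpotent {M : Matrix (Fin n) (Fin n) R}
    (hM : M.IsUpperTriangular) (hdiag : ∀ i, IsNilpotent (M i i)) : IsNilpotent M := by
  choose k hk using hdiag
  set K := ∑ i, k i
  have hdiagK : ∀ i, (M ^ K) i i = 0 := fun i => by
    rw [hM.pow_apply_self]
    exact pow_eq_zero_of_le (Finset.single_le_sum (fun _ _ => Nat.zero_le _)
      (Finset.mem_univ i)) (hk i)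
  refine ⟨K * n, ?_⟩
  rw [pow_mul]
  refine pow_eq_zero_of_strictlyUpper fun i j hji => ?_
  rcases hji.lt_or_eq with hlt | rfl
  · exact hM.pow K hlt
  · exact hdiagK j

end Semiring

end Matrix

namespace Grading

variable {G : Type*} [Group G] [DecidableEq G] {R : Type*} [Ring R] (A : Grading G R)

theorem eq_zero_of_mem_of_eq_add {g h k : G} {x y z : R} (hx : x ∈ A.C g) (hy : y ∈ A.C h)
    (hz : z ∈ A.C k) (hhg : h ≠ g) (hkg : k ≠ g) (hxyz : x = y + z) : x = 0 := by
  have hcompl : x ∈ ⨆ (j) (_ : j ≠ g), A.C j := hxyz ▸ add_mem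
    (le_iSup₂ (f := fun j (_ : j ≠ g) => A.C j) h hhg hy)
    (le_iSup₂ (f := fun j (_ : j ≠ g) => A.C j) k hkg hz)
  exact AddSubgroup.disjoint_def.mp (A.isInternal.addSubgroup_iSupIndep g) hx hcompl

theorem eq_zero_of_mem_of_mem {g h : G} {x : R} (hg : x ∈ A.C g) (hh : x ∈ A.C h)
    (hgh : g ≠ h) : x = 0 :=
  A.eq_zero_of_mem_of_eq_add hg hh (zero_mem (A.C h)) hgh.symm hgh.symm (add_zero x).symm

theorem mem_one_of_isIdempotentElem {g : G} {f : R} (hf : f ∈ A.C g)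
    (hfi : IsIdempotentElem f) : f ∈ A.C 1 := by
  by_cases hg : g = 1
  · exact hg ▸ hf
  have hff : f ∈ A.C (g * g) := hfi.eq ▸ A.mul_mem hf hf
  rw [A.eq_zero_of_mem_of_mem hf hff (by simpa using hg)]
  exact zero_mem _

theorem IsGradedNilClean.exists_mem_one_mem {A : Grading G R} {g : G} {a : R}
    (ha : a ∈ A.C g) (hclean : A.IsGradedNilClean a) :
    ∃ f b : R, f ∈ A.C 1 ∧ IsIdempotentElem f ∧ b ∈ A.C g ∧ IsNilpotent b ∧ a = f + b := by
  obtain ⟨f, b, ⟨_, hf⟩, hfi, ⟨h, hb⟩, hbn, rfl⟩ := hclean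
  have hf1 := A.mem_one_of_isIdempotentElem hf hfi
  by_cases hg : g = 1
  · subst hg
    exact ⟨f, b, hf1, hfi, by simpa using sub_mem ha hf1, hbn, rfl⟩
  by_cases hh : h = g
  · exact ⟨f, b, hf1, hfi, hh ▸ hb, hbn, rfl⟩
  have hzero : f + b = 0 := A.eq_zero_of_mem_of_eq_add ha hf1 hb (Ne.symm hg) hh rfl
  exact ⟨0, 0, zero_mem _, .zero, zero_mem _, .zero, by rw [hzero, add_zero]⟩

end Grading

section UpperTriangular

variable {G : Type*} [Group G] [DecidableEq G] {R : Type*} [Ring R] {A : Grading G R} {n : ℕ}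
  {σ : Fin n → G} {lam : G}

theorem mem_triC_iff {M : Matrix (Fin n) (Fin n) R} :
    M ∈ triC A σ lam ↔ M.IsUpperTriangular ∧ ∀ i j, M i j ∈ A.C (σ i * lam * (σ j)⁻¹) :=
  Iff.rfl

theorem diagonal_mem_triC {d : Fin n → R} (hd : ∀ i, d i ∈ A.C (σ i * lam * (σ i)⁻¹)) :
    Matrix.diagonal d ∈ triC A σ lam := by
  refine mem_triC_iff.mpr ⟨Matrix.blockTriangular_diagonal d, fun i j => ?_⟩
  by_cases hij : i = j
  · subst hij
    simpa using hd i
  · simp [hij]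

theorem exists_triC_nilClean_of_gradedNilClean (hR : A.GradedNilClean)
    {M : Matrix (Fin n) (Fin n) R} (hM : M ∈ triC A σ lam) :
    ∃ E B : Matrix (Fin n) (Fin n) R, (∃ lam, E ∈ triC A σ lam) ∧
      IsIdempotentElem E ∧ (∃ lam, B ∈ triC A σ lam) ∧ IsNilpotent B ∧ M = E + B := by
  obtain ⟨hMup, hMdeg⟩ := mem_triC_iff.mp hM
  choose f b hf hfi hb hbn hdiag using fun i =>
    (hR _ ⟨_, hMdeg i i⟩).exists_mem_one_mem (hMdeg i i)
  have hB : M - Matrix.diagonal f = M - Matrix.diagonal M.diag + Matrix.diagonal b := by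
    rw [show M.diag = fun i => f i + b i from funext hdiag, ← Matrix.diagonal_add]
    abel
  have hBmem : M - Matrix.diagonal f ∈ triC A σ lam :=
    hB ▸ add_mem (sub_mem hM (diagonal_mem_triC fun i => hMdeg i i)) (diagonal_mem_triC hb)
  refine ⟨Matrix.diagonal f, M - Matrix.diagonal f, ⟨1, diagonal_mem_triC ?_⟩, ?_, ⟨lam, hBmem⟩,
    ?_, (add_sub_cancel _ _).symm⟩
  · simpa using hf
  · rw [IsIdempotentElem, Matrix.diagonal_mul_diagonal]
    exact congrArg Matrix.diagonal (funext fun i => (hfi i).eq)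
  · refine (mem_triC_iff.mp hBmem).1.isNilpotent fun i => ?_
    simpa [hdiag i] using hbn i

theorem gradedNilClean_of_triC_nilClean (i : Fin n)
    (H : ∀ M : Matrix (Fin n) (Fin n) R, (∃ lam, M ∈ triC A (fun _ => 1) lam) →
      ∃ E B : Matrix (Fin n) (Fin n) R, (∃ lam, E ∈ triC A (fun _ => 1) lam) ∧
        IsIdempotentElem E ∧ (∃ lam, B ∈ triC A (fun _ => 1) lam) ∧ IsNilpotent B ∧
        M = E + B) :
    A.GradedNilClean := by
  rintro a ⟨g, ha⟩
  obtain ⟨E, B, ⟨_, hE⟩, hEi, ⟨_, hB⟩, ⟨k, hBk⟩, hsum⟩ :=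
    H (Matrix.diagonal fun _ => a) ⟨g, diagonal_mem_triC fun _ => by simpa using ha⟩
  obtain ⟨hEup, hEdeg⟩ := mem_triC_iff.mp hE
  obtain ⟨hBup, hBdeg⟩ := mem_triC_iff.mp hB
  refine ⟨E i i, B i i, ⟨_, hEdeg i i⟩, ?_, ⟨_, hBdeg i i⟩, ⟨k, ?_⟩, ?_⟩
  · rw [IsIdempotentElem, ← hEup.mul_apply_self hEup, hEi.eq]
  · rw [← hBup.pow_apply_self, hBk, Matrix.zero_apply]
  · simpa using congrFun₂ hsum i i

end UpperTriangular

/-- `R` is graded nil clean iff for every `σ ∈ G^n` the graded upper triangular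
matrix ring `T_n(R)(σ)` is graded nil clean. -/
theorem stmt13 {G : Type*} [Group G] [DecidableEq G] {R : Type*} [Ring R]
    (A : Grading G R) (n : ℕ) (hn : 0 < n) :
    A.GradedNilClean ↔
      ∀ σ : Fin n → G, ∀ M : Matrix (Fin n) (Fin n) R,
        (∃ lam, M ∈ triC A σ lam) →
          ∃ E B : Matrix (Fin n) (Fin n) R, (∃ lam, E ∈ triC A σ lam) ∧
            IsIdempotentElem E ∧ (∃ lam, B ∈ triC A σ lam) ∧
            IsNilpotent B ∧ M = E + B :=
  ⟨fun hR _ _ ⟨_, hM⟩ => exists_triC_nilClean_of_gradedNilClean hR hM,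
    fun H => gradedNilClean_of_triC_nilClean ⟨0, hn⟩ (H _)⟩
end

section
/- Let R = ⊕_{g∈G} R_g be a G-graded ring in which every idempotent and every nilpotent element is homogeneous. If the group ring R[G], graded by (R[G])_g = Σ_{h∈G} R_{gh^{-1}} h, is graded nil clean, then R is graded nil clean. -/
/-!
The identity component of `R[G]` consists of the elements `Σ_h x_h h` with `x_h ∈ R_{h⁻¹}`, and
on it the augmentation `Σ_h x_h h ↦ Σ_h x_h` is a ring homomorphism to `R` (the inverse of the
isomorphism `R ≅ (R[G])_e`). A homogeneous `a ∈ R_g` is the augmentation of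
`a g⁻¹ ∈ (R[G])_e`. In a nil clean decomposition of `a g⁻¹` the homogeneous idempotent lies in the
identity component, hence so does the nilpotent, and the augmentation carries the decomposition
to an idempotent plus a nilpotent summing to `a`; both are homogeneous by hypothesis.
-/

namespace Grading

variable {G : Type*} [Group G] [DecidableEq G] {R : Type*} [Ring R]

theorem eq_zero_of_mem_of_mem_s16 (𝒜 : Grading G R) {k l : G} (hkl : k ≠ l) {c : R}
    (hk : c ∈ 𝒜.C k) (hl : c ∈ 𝒜.C l) : c = 0 :=
  AddSubgroup.disjoint_def.mp (𝒜.isInternal.addSubgroup_iSupIndep.pairwiseDisjoint hkl) hk hl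

theorem mem_one_of_isIdempotentElem_s16 (𝒜 : Grading G R) {f : R} (hf : 𝒜.Homogeneous f)
    (hidem : IsIdempotentElem f) : f ∈ 𝒜.C 1 := by
  obtain ⟨k, hk⟩ := hf
  by_cases hk1 : k = 1
  · exact hk1 ▸ hk
  · have hkk : f ∈ 𝒜.C (k * k) := hidem ▸ 𝒜.mul_mem hk hk
    rw [𝒜.eq_zero_of_mem_of_mem_s16 (by simpa using hk1) hk hkk]
    exact zero_mem _

def oneSubring (𝒜 : Grading G R) : Subring R :=
  { 𝒜.C 1 with
    one_mem' := 𝒜.one_mem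
    mul_mem' := fun ha hb => by simpa using 𝒜.mul_mem ha hb }

end Grading

section TwistedGroupRing

variable {G : Type*} {R : Type*} [Ring R] {A : Type*} [Ring A]

noncomputable def augmentation (ε : (G →₀ R) ≃+ A) : A →+ R :=
  (Finsupp.liftAddHom fun _ => AddMonoidHom.id R).comp ε.symm.toAddMonoidHom

theorem augmentation_apply (ε : (G →₀ R) ≃+ A) (x : G →₀ R) :
    augmentation ε (ε x) = x.sum fun _ r => r := by
  rw [augmentation, AddMonoidHom.comp_apply, AddEquiv.coe_toAddMonoidHom, ε.symm_apply_apply]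
  exact Finsupp.liftAddHom_apply _ _

@[simp]
theorem augmentation_single (ε : (G →₀ R) ≃+ A) (g : G) (r : R) :
    augmentation ε (ε (Finsupp.single g r)) = r := by
  simp [augmentation]

variable [Group G] [DecidableEq G]

theorem augmentation_mul (𝒜 : Grading G R) (ε : (G →₀ R) ≃+ A)
    (hmul : ∀ (g h g' h' : G) (r s : R), r ∈ 𝒜.C g → s ∈ 𝒜.C h →
      ε (Finsupp.single g' r) * ε (Finsupp.single h' s) =
        ε (Finsupp.single (h⁻¹ * g' * h * h') (r * s)))
    {x y : G →₀ R} (hx : ∀ h, x h ∈ 𝒜.C h⁻¹) (hy : ∀ h, y h ∈ 𝒜.C h⁻¹) :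
    augmentation ε (ε x * ε y) = augmentation ε (ε x) * augmentation ε (ε y) := by
  have hsum : ∀ z : G →₀ R, ε z = z.sum fun g r => ε (Finsupp.single g r) := fun z => by
    rw [← map_finsuppSum, Finsupp.sum_single]
  rw [augmentation_apply, augmentation_apply, hsum x, hsum y, Finsupp.sum_mul, Finsupp.sum_mul,
    map_finsuppSum]
  refine Finsupp.sum_congr fun h₁ _ => ?_
  rw [Finsupp.mul_sum, Finsupp.mul_sum, map_finsuppSum]
  refine Finsupp.sum_congr fun h₂ _ => ?_
  rw [hmul h₁⁻¹ h₂⁻¹ h₁ h₂ _ _ (hx h₁) (hy h₂), augmentation_single]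

noncomputable def augmentationHom (𝒜 : Grading G R) (ℬ : Grading G A) (ε : (G →₀ R) ≃+ A)
    (hone : ε (Finsupp.single (1 : G) (1 : R)) = 1)
    (hmul : ∀ (g h g' h' : G) (r s : R), r ∈ 𝒜.C g → s ∈ 𝒜.C h →
      ε (Finsupp.single g' r) * ε (Finsupp.single h' s) =
        ε (Finsupp.single (h⁻¹ * g' * h * h') (r * s)))
    (hgrade : ∀ a ∈ ℬ.C 1, ∃ x : G →₀ R, ε x = a ∧ ∀ h : G, x h ∈ 𝒜.C h⁻¹) :
    ℬ.oneSubring →+* R where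
  toFun a := augmentation ε a
  map_one' := by simp [← hone]
  map_mul' := by
    rintro ⟨a, ha⟩ ⟨b, hb⟩
    obtain ⟨x, rfl, hx⟩ := hgrade a ha
    obtain ⟨y, rfl, hy⟩ := hgrade b hb
    exact augmentation_mul 𝒜 ε hmul hx hy
  map_zero' := map_zero _
  map_add' _ _ := map_add _ _ _

end TwistedGroupRing

/-- Let `R` be a `G`-graded ring in which every idempotent and every nilpotent is
homogeneous.  Let `A` be the twisted group ring `R[G]`, i.e. a ring with an
additive isomorphism `ε : (G →₀ R) ≃+ A` realizing the twisted multiplication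
`(r_g g')(r_h h') = r_g r_h (h⁻¹ g' h h')`, equipped with the `G`-grading
`(R[G])_k = Σ_h R_{k h⁻¹} h`.  If `R[G]` is graded nil clean, then `R` is graded
nil clean. -/
theorem stmt16 {G : Type*} [Group G] [DecidableEq G] {R : Type*} [Ring R]
    {A : Type*} [Ring A]
    (𝒜 : Grading G R) (ℬ : Grading G A) (ε : (G →₀ R) ≃+ A)
    (hone : ε (Finsupp.single (1 : G) (1 : R)) = 1)
    (hmul : ∀ (g h g' h' : G) (r s : R), r ∈ 𝒜.C g → s ∈ 𝒜.C h →
      ε (Finsupp.single g' r) * ε (Finsupp.single h' s) =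
        ε (Finsupp.single (h⁻¹ * g' * h * h') (r * s)))
    (hgrade : ∀ (k : G) (a : A), a ∈ ℬ.C k ↔
      ∃ x : G →₀ R, ε x = a ∧ ∀ h : G, x h ∈ 𝒜.C (k * h⁻¹))
    (hidem : ∀ x : R, IsIdempotentElem x → 𝒜.Homogeneous x)
    (hnilp : ∀ x : R, IsNilpotent x → 𝒜.Homogeneous x)
    (hB : ℬ.GradedNilClean) : 𝒜.GradedNilClean := by
  rintro a ⟨g, ha⟩
  have hα : ε (Finsupp.single g⁻¹ a) ∈ ℬ.C 1 := by
    refine (hgrade 1 _).2 ⟨_, rfl, fun h => ?_⟩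
    rw [Finsupp.single_apply]
    split_ifs with hg
    · simpa [← hg] using ha
    · exact zero_mem _
  obtain ⟨f, b, hf_hom, hf_idem, -, ⟨n, hbn⟩, hsum⟩ := hB _ ⟨1, hα⟩
  have hf : f ∈ ℬ.C 1 := ℬ.mem_one_of_isIdempotentElem_s16 hf_hom hf_idem
  have hb : b ∈ ℬ.C 1 := by
    rw [eq_sub_of_add_eq' hsum.symm]
    exact sub_mem hα hf
  let φ := augmentationHom 𝒜 ℬ ε hone hmul fun a ha => by simpa using (hgrade 1 a).1 ha
  have hφf : IsIdempotentElem (φ ⟨f, hf⟩) :=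
    (show IsIdempotentElem (⟨f, hf⟩ : ℬ.oneSubring) from Subtype.ext hf_idem).map φ
  have hφb : IsNilpotent (φ ⟨b, hb⟩) :=
    IsNilpotent.map ⟨n, Subtype.ext (by simpa using hbn)⟩ φ
  refine ⟨_, _, hidem _ hφf, hφf, hnilp _ hφb, hφb, ?_⟩
  calc a = φ ⟨_, hα⟩ := (augmentation_single ε _ a).symm
    _ = φ (⟨f, hf⟩ + ⟨b, hb⟩) := congrArg φ (Subtype.ext hsum)
    _ = _ := map_add φ _ _
end
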